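/- The simplex method with the largest distance rule applied to min c^⊤x s.t. Ax = b, x ≥ 0 (with rank A = m, primal and dual optimal basic solutions existing, and a non-optimal initial BFS) generates at most (n − m) · ⌈(mγ/(βδ)) · log(mγ/δ)⌉ different basic feasible solutions. -/

import Mathlib

open Matrix Finset

/-- The Euclidean norm of the `j`-th column of `A`. -/
noncomputable def colNorm {m n : ℕ} (A : Matrix (Fin m) (Fin n) ℝ) (j : Fin n) : ℝ :=
  Real.sqrt (∑ i, A i j ^ 2)

/-- `bas` selects an invertible `m × m` submatrix of `A` (a basis). -/
def IsBasis {m n : ℕ} (A : Matrix (Fin m) (Fin n) ℝ) (bas : Fin m → Fin n) : Prop :=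
  Function.Injective bas ∧ IsUnit (A.submatrix id bas)

/-- `x` is a basic feasible solution of `A x = b`, `x ≥ 0`. -/
def IsBasicFeasible {m n : ℕ} (A : Matrix (Fin m) (Fin n) ℝ) (b : Fin m → ℝ)
    (x : Fin n → ℝ) : Prop :=
  (∃ bas : Fin m → Fin n, IsBasis A bas ∧ ∀ j, j ∉ Set.range bas → x j = 0) ∧
    A *ᵥ x = b ∧ 0 ≤ x

/-- `x'` is obtained from the basic feasible solution `x` by one pivot of the simplex
method with the largest distance rule: for some basis `bas` of `x`, simplex multipliers
`y` (so the reduced costs are `c̄_j = c_j − (Aᵀ y)_j`), and entering index `jl`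
minimizing `c̄_j / ‖a_j‖` over the nonbasis with `c̄_{jl} < 0`, the new point `x'` is
feasible, vanishes on the nonbasis except at `jl`, and takes the maximal step (minimal
objective value) on that ray. -/
def LDPivot {m n : ℕ} (A : Matrix (Fin m) (Fin n) ℝ) (b : Fin m → ℝ) (c : Fin n → ℝ)
    (x x' : Fin n → ℝ) : Prop :=
  ∃ (bas : Fin m → Fin n) (y : Fin m → ℝ) (jl : Fin n),
    IsBasis A bas ∧ (∀ j, j ∉ Set.range bas → x j = 0) ∧ A *ᵥ x = b ∧ 0 ≤ x ∧
    ((A.submatrix id bas)ᵀ *ᵥ y = fun i => c (bas i)) ∧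
    jl ∉ Set.range bas ∧ c jl - (Aᵀ *ᵥ y) jl < 0 ∧
    (∀ j, j ∉ Set.range bas →
      (c jl - (Aᵀ *ᵥ y) jl) / colNorm A jl ≤ (c j - (Aᵀ *ᵥ y) j) / colNorm A j) ∧
    A *ᵥ x' = b ∧ 0 ≤ x' ∧ (∀ j, j ∉ Set.range bas → j ≠ jl → x' j = 0) ∧
    (∀ x'', A *ᵥ x'' = b → 0 ≤ x'' → (∀ j, j ∉ Set.range bas → j ≠ jl → x'' j = 0) →
      c ⬝ᵥ x' ≤ c ⬝ᵥ x'')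

/-!
Write `g(w) = cᵀw − z*` for the optimality gap. A pivot of the largest distance rule that moves
the point enters a column `j` with reduced cost `c̄_j < 0`. Minimality of `c̄_j / ‖a_j‖` gives
`β (−c̄_i) ≤ −c̄_j` for every column `i`, so evaluating the gap at the optimal solution `v`
yields `β g(x) ≤ (−c̄_j) ∑ v ≤ (−c̄_j) mγ`, while the step lowers the objective by
`(−c̄_j) x'_j ≥ (−c̄_j) δ`. Hence every change of point multiplies the gap by at most
`q = 1 − βδ/(mγ)`, and `q ^ K < δ/(mγ)` for `K = ⌊(mγ/(βδ)) log(mγ/δ)⌋₊ + 1`.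

From the given dual optimal solution, moving along directions orthogonal to the tight columns
(ratio test) produces an optimal slack `s ≥ 0` vanishing on at least `m` columns, and `g(w) = sᵀw`
on the feasible set. A non-optimal basic feasible solution `u` has a coordinate `j` with `u_j > 0`
maximizing `s` over its support, so `g(u) ≤ s_j mγ`, while any basic feasible solution `w` with
`w_j > 0` has `g(w) ≥ s_j δ > q ^ K g(u)`. The visited points sharing such an index `j` therefore
have gaps within a factor `q ^ K` of each other but pairwise separated by a factor `q`: there are at
most `K` of them, for each of the at most `n − m` indices with `s_j ≠ 0`.
-/

section Duality

variable {κ ι : Type*} [Fintype κ] [Fintype ι]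

theorem dotProduct_eq_dotProduct_mulVec_add (A : Matrix κ ι ℝ) (y : κ → ℝ) (c w : ι → ℝ) :
    c ⬝ᵥ w = y ⬝ᵥ (A *ᵥ w) + (c - Aᵀ *ᵥ y) ⬝ᵥ w := by
  rw [dotProduct_mulVec, sub_dotProduct, ← mulVec_transpose]
  ring

theorem Submodule.exists_dotProduct_pos_of_notMem {W : Submodule ℝ (κ → ℝ)} {a : κ → ℝ}
    (ha : a ∉ W) : ∃ e : κ → ℝ, (∀ w ∈ W, e ⬝ᵥ w = 0) ∧ 0 < e ⬝ᵥ a := by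
  classical
  obtain ⟨f, hfa, hW⟩ := W.exists_le_ker_of_notMem ha
  have hf : ∀ w, (dotProductEquiv ℝ κ).symm f ⬝ᵥ w = f w := fun w => by
    rw [← dotProductEquiv_apply_apply, LinearEquiv.apply_symm_apply]
  rcases hfa.lt_or_gt with hneg | hpos
  · refine ⟨-(dotProductEquiv ℝ κ).symm f, fun w hw => ?_, ?_⟩
    · rw [neg_dotProduct, hf, LinearMap.mem_ker.1 (hW hw), neg_zero]
    · rw [neg_dotProduct, hf]
      exact neg_pos.2 hneg
  · exact ⟨(dotProductEquiv ℝ κ).symm f, fun w hw => (hf w).trans (hW hw), (hf a).symm ▸ hpos⟩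

theorem exists_sub_smul_nonneg_apply_eq_zero {s d : ι → ℝ} (hs : 0 ≤ s) {j₀ : ι}
    (hd : 0 < d j₀) : ∃ ρ : ℝ, 0 ≤ s - ρ • d ∧ ∃ j₁, 0 < d j₁ ∧ (s - ρ • d) j₁ = 0 := by
  classical
  obtain ⟨j₁, hj₁, hmin⟩ :=
    (univ.filter fun j => 0 < d j).exists_min_image (fun j => s j / d j) ⟨j₀, by simpa⟩
  rw [mem_filter] at hj₁
  have hρ : 0 ≤ s j₁ / d j₁ := div_nonneg (hs j₁) hj₁.2.le
  refine ⟨s j₁ / d j₁, fun j => ?_, j₁, hj₁.2, by simp [div_mul_cancel₀ _ hj₁.2.ne']⟩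
  rw [Pi.zero_apply, Pi.sub_apply, Pi.smul_apply, smul_eq_mul, sub_nonneg]
  rcases le_or_gt (d j) 0 with hdj | hdj
  · exact (mul_nonpos_of_nonneg_of_nonpos hρ hdj).trans (hs j)
  · exact (le_div_iff₀ hdj).1 (hmin j (by simpa using hdj))

def tightSpan (A : Matrix κ ι ℝ) (c : ι → ℝ) (y : κ → ℝ) : Submodule ℝ (κ → ℝ) :=
  Submodule.span ℝ (A.col '' {j | (c - Aᵀ *ᵥ y) j = 0})

theorem exists_tightSpan_gt (A : Matrix κ ι ℝ) (c : ι → ℝ) {y : κ → ℝ}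
    (hy : 0 ≤ c - Aᵀ *ᵥ y) {j₀ : ι} (hj₀ : A.col j₀ ∉ tightSpan A c y) :
    ∃ y', 0 ≤ c - Aᵀ *ᵥ y' ∧
      {j | (c - Aᵀ *ᵥ y) j = 0} ⊆ {j | (c - Aᵀ *ᵥ y') j = 0} ∧
      tightSpan A c y < tightSpan A c y' := by
  obtain ⟨e, he, hej₀⟩ := Submodule.exists_dotProduct_pos_of_notMem hj₀
  have hcol : ∀ j, (Aᵀ *ᵥ e) j = e ⬝ᵥ A.col j := fun j => dotProduct_comm _ _
  obtain ⟨ρ, hnonneg, j₁, hj₁, hj₁0⟩ :=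
    exists_sub_smul_nonneg_apply_eq_zero hy (d := Aᵀ *ᵥ e) ((hcol j₀).symm ▸ hej₀)
  have hslack : c - Aᵀ *ᵥ (y + ρ • e) = (c - Aᵀ *ᵥ y) - ρ • (Aᵀ *ᵥ e) := by
    rw [mulVec_add, mulVec_smul, sub_add_eq_sub_sub]
  have hsub : {j | (c - Aᵀ *ᵥ y) j = 0} ⊆ {j | (c - Aᵀ *ᵥ (y + ρ • e)) j = 0} := by
    intro j (hj : (c - Aᵀ *ᵥ y) j = 0)
    have h0 : e ⬝ᵥ A.col j = 0 := he _ (Submodule.subset_span ⟨j, hj, rfl⟩)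
    show (c - Aᵀ *ᵥ (y + ρ • e)) j = 0
    rw [hslack, Pi.sub_apply, hj, Pi.smul_apply, hcol, h0, smul_zero, sub_zero]
  refine ⟨y + ρ • e, hslack ▸ hnonneg, hsub,
    lt_of_le_of_ne (Submodule.span_mono (Set.image_mono hsub)) fun heq => ?_⟩
  have hmem : A.col j₁ ∈ tightSpan A c y :=
    heq ▸ Submodule.subset_span ⟨j₁, show _ = _ from hslack ▸ hj₁0, rfl⟩
  exact (hcol j₁ ▸ hj₁).ne' (he _ hmem)

theorem exists_tightSpan_eq_top {A : Matrix κ ι ℝ} (hA : A.rank = Fintype.card κ) (c : ι → ℝ)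
    {y₀ : κ → ℝ} (h₀ : 0 ≤ c - Aᵀ *ᵥ y₀) :
    ∃ y, 0 ≤ c - Aᵀ *ᵥ y ∧ {j | (c - Aᵀ *ᵥ y₀) j = 0} ⊆ {j | (c - Aᵀ *ᵥ y) j = 0} ∧
      tightSpan A c y = ⊤ := by
  have hcols : Submodule.span ℝ (Set.range A.col) = ⊤ := Submodule.eq_top_of_finrank_eq <| by
    rw [← rank_eq_finrank_span_cols, hA, Module.finrank_fintype_fun_eq_card]
  obtain ⟨y, ⟨hy, hsub⟩, hmax⟩ := (wellFounded_gt.onFun (f := tightSpan A c)).has_min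
    {y | 0 ≤ c - Aᵀ *ᵥ y ∧ {j | (c - Aᵀ *ᵥ y₀) j = 0} ⊆ {j | (c - Aᵀ *ᵥ y) j = 0}}
    ⟨y₀, h₀, subset_rfl⟩
  refine ⟨y, hy, hsub, ?_⟩
  by_contra hne
  obtain ⟨j₀, hj₀⟩ : ∃ j₀, A.col j₀ ∉ tightSpan A c y := by
    by_contra! h
    exact hne (eq_top_iff.2 (hcols ▸ Submodule.span_le.2 (Set.range_subset_iff.2 h)))
  obtain ⟨y', hy', hsub', hlt⟩ := exists_tightSpan_gt A c hy hj₀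
  exact hmax y' ⟨hy', hsub.trans hsub'⟩ hlt

theorem exists_sparse_optimal_slack {A : Matrix κ ι ℝ} (hA : A.rank = Fintype.card κ)
    {b : κ → ℝ} {c v : ι → ℝ} (hv : 0 ≤ v) (hAv : A *ᵥ v = b) {y₀ : κ → ℝ}
    (h₀ : 0 ≤ c - Aᵀ *ᵥ y₀) (hopt : y₀ ⬝ᵥ b = c ⬝ᵥ v) :
    ∃ s : ι → ℝ, 0 ≤ s ∧ #{j | s j ≠ 0} ≤ Fintype.card ι - Fintype.card κ ∧
      ∀ w, A *ᵥ w = b → c ⬝ᵥ w - c ⬝ᵥ v = s ⬝ᵥ w := by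
  classical
  obtain ⟨y, hy, hsub, htop⟩ := exists_tightSpan_eq_top hA c h₀
  have htight : Fintype.card κ ≤ #{j | (c - Aᵀ *ᵥ y) j = 0} := by
    have := finrank_le_of_span_eq_top (R := ℝ)
      (v := fun j : {j // (c - Aᵀ *ᵥ y) j = 0} => A.col j) (by
        rw [← htop, tightSpan, Set.image_eq_range]; rfl)
    simpa [Fintype.card_subtype] using this
  have hcompl₀ : ∀ j, (c - Aᵀ *ᵥ y₀) j * v j = 0 := by
    have h := dotProduct_eq_dotProduct_mulVec_add A y₀ c v
    rw [hAv, hopt, left_eq_add] at h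
    simpa using (sum_eq_zero_iff_of_nonneg fun j _ => mul_nonneg (h₀ j) (hv j)).1 h
  have hcompl : (c - Aᵀ *ᵥ y) ⬝ᵥ v = 0 := sum_eq_zero fun j _ => by
    rcases mul_eq_zero.1 (hcompl₀ j) with h | h
    · rw [show (c - Aᵀ *ᵥ y) j = 0 from hsub h, zero_mul]
    · rw [h, mul_zero]
  refine ⟨c - Aᵀ *ᵥ y, hy, ?_, fun w hw => ?_⟩
  · have := card_filter_add_card_filter_not (s := univ) fun j => (c - Aᵀ *ᵥ y) j = 0
    rw [card_univ] at this
    simp only [ne_eq]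
    omega
  · rw [dotProduct_eq_dotProduct_mulVec_add A y c w, dotProduct_eq_dotProduct_mulVec_add A y c v,
      hw, hAv, hcompl]
    ring

theorem exists_pos_dotProduct_le_mul_sum {s u : ι → ℝ} (hu : 0 ≤ u) (hsu : 0 < s ⬝ᵥ u) :
    ∃ j, 0 < u j ∧ s ⬝ᵥ u ≤ s j * ∑ i, u i := by
  classical
  obtain ⟨i, hi⟩ : ∃ i, 0 < u i := by
    by_contra! h
    have hu0 : u = 0 := funext fun i => le_antisymm (h i) (hu i)
    simp [hu0] at hsu
  obtain ⟨j, hj, hmax⟩ := (univ.filter fun i => 0 < u i).exists_max_image s ⟨i, by simpa using hi⟩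
  refine ⟨j, (mem_filter.1 hj).2, ?_⟩
  rw [mul_sum]
  refine sum_le_sum fun i _ => ?_
  rcases (show (0 : ℝ) ≤ u i from hu i).eq_or_lt with hi | hi
  · rw [← hi, mul_zero, mul_zero]
  · exact mul_le_mul_of_nonneg_right (hmax i (by simpa using hi)) hi.le

theorem exists_fixed_index {s u : ι → ℝ} (hs : 0 ≤ s) (hu : 0 ≤ u) (hsu : 0 < s ⬝ᵥ u)
    {δ Γ : ℝ} (hδ : 0 ≤ δ) (hΓ : ∑ i, u i ≤ Γ) :
    ∃ j, s j ≠ 0 ∧ 0 < u j ∧ ∀ w, 0 ≤ w → δ ≤ w j → δ / Γ * (s ⬝ᵥ u) ≤ s ⬝ᵥ w := by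
  obtain ⟨j, hj, hle⟩ := exists_pos_dotProduct_le_mul_sum hu hsu
  have hΓ0 : 0 < Γ := hj.trans_le <| (single_le_sum (fun i _ => hu i) (mem_univ j)).trans hΓ
  have hsj : s ⬝ᵥ u ≤ s j * Γ := hle.trans (mul_le_mul_of_nonneg_left hΓ (hs j))
  refine ⟨j, fun h => by simp [h] at hsj; linarith, hj, fun w hw hδw => ?_⟩
  calc δ / Γ * (s ⬝ᵥ u) ≤ δ / Γ * (s j * Γ) := by
        gcongr
    _ = s j * δ := by field_simp
    _ ≤ s j * w j := mul_le_mul_of_nonneg_left hδw (hs j)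
    _ ≤ s ⬝ᵥ w := single_le_sum (fun i _ => mul_nonneg (hs i) (hw i)) (mem_univ j)

end Duality

section Counting

variable {α : Type*} {g : α → ℝ} {q : ℝ}

theorem Finset.card_le_of_geometric_separation (hq : 0 ≤ q) (hq1 : q < 1) {T : Finset α}
    (hpos : ∀ u ∈ T, 0 < g u)
    (hsep : ∀ u ∈ T, ∀ w ∈ T, u ≠ w → g w ≤ q * g u ∨ g u ≤ q * g w) {K : ℕ}
    (hclose : ∀ u ∈ T, ∀ w ∈ T, q ^ K * g u < g w) : #T ≤ K := by
  classical
  induction K generalizing T with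
  | zero =>
    rcases T.eq_empty_or_nonempty with rfl | ⟨u, hu⟩
    · rfl
    · simpa using hclose u hu u hu
  | succ K ih =>
    rcases T.eq_empty_or_nonempty with rfl | hT
    · simp
    obtain ⟨b, hb, hmax⟩ := T.exists_max_image g hT
    have hcontract : ∀ u ∈ T.erase b, g u ≤ q * g b := fun u hu => by
      obtain ⟨hub, huT⟩ := mem_erase.1 hu
      refine (hsep b hb u huT (Ne.symm hub)).resolve_right fun h => ?_
      nlinarith [hmax u huT, hpos b hb]
    have hcard := ih (T := T.erase b) (fun u hu => hpos u (mem_of_mem_erase hu))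
      (fun u hu w hw => hsep u (mem_of_mem_erase hu) w (mem_of_mem_erase hw))
      fun u hu w hw => calc
        q ^ K * g u ≤ q ^ K * (q * g b) :=
          mul_le_mul_of_nonneg_left (hcontract u hu) (pow_nonneg hq K)
        _ = q ^ (K + 1) * g b := by ring
        _ < g w := hclose b hb w (mem_of_mem_erase hw)
    rw [← card_erase_add_one hb]
    omega

theorem Set.ncard_le_mul_card_of_geometric_separation {ι : Type*} (hq : 0 ≤ q) (hq1 : q < 1)
    {S : Set α} (hpos : ∀ u ∈ S, 0 < g u)
    (hsep : ∀ u ∈ S, ∀ w ∈ S, u ≠ w → g w ≤ q * g u ∨ g u ≤ q * g w)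
    {J : Finset ι} {idx : α → ι} (hidx : ∀ u ∈ S, idx u ∈ J) {K : ℕ}
    (hclose : ∀ u ∈ S, ∀ w ∈ S, idx u = idx w → q ^ K * g u < g w) :
    S.ncard ≤ K * #J := by
  classical
  rcases S.finite_or_infinite with hS | hS
  · rw [ncard_eq_toFinset_card S hS]
    refine card_le_mul_card_image_of_maps_to (fun u hu => hidx u (by simpa using hu)) K
      fun j _ => card_le_of_geometric_separation (g := g) hq hq1 ?_ ?_ ?_ <;>
      simp only [mem_filter, Finite.mem_toFinset, and_imp]
    · exact fun u hu _ => hpos u hu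
    · exact fun u hu _ w hw _ => hsep u hu w hw
    · exact fun u hu hju w hw hjw => hclose u hu w hw (hju.trans hjw.symm)
  · simp [hS.ncard]

theorem le_mul_of_ne_of_antitone {f : ℕ → α} (hq : 0 ≤ q) (hanti : Antitone (g ∘ f))
    (hstep : ∀ t, f (t + 1) ≠ f t → g (f (t + 1)) ≤ q * g (f t)) {a b : ℕ} (hab : a ≤ b)
    (hne : f a ≠ f b) : g (f b) ≤ q * g (f a) := by
  induction b, hab using Nat.le_induction with
  | base => exact absurd rfl hne
  | succ b hab ih =>
    by_cases h : f (b + 1) = f b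
    · rw [h] at hne ⊢
      exact ih hne
    · exact (hstep b h).trans (mul_le_mul_of_nonneg_left (hanti hab) hq)

end Counting

theorem one_sub_pow_floor_lt {ε ρ : ℝ} (hε : 0 < ε) (hε1 : ε ≤ 1) (hρ : 0 < ρ) :
    (1 - ε) ^ (⌊Real.log ρ⁻¹ / ε⌋₊ + 1) < ρ := by
  set K := ⌊Real.log ρ⁻¹ / ε⌋₊ + 1
  have hK : -(ε * K) < Real.log ρ := by
    have hlt : Real.log ρ⁻¹ < K * ε := by
      push_cast [K]
      exact (div_lt_iff₀ hε).1 (Nat.lt_floor_add_one _)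
    linarith [Real.log_inv ρ]
  calc (1 - ε) ^ K ≤ Real.exp (-ε) ^ K :=
        pow_le_pow_left₀ (by linarith) (by linarith [Real.add_one_le_exp (-ε)]) K
    _ = Real.exp (-(ε * K)) := by rw [← Real.exp_nat_mul]; ring_nf
    _ < Real.exp (Real.log ρ) := Real.exp_lt_exp.2 hK
    _ = ρ := Real.exp_log hρ

section LargestDistance

variable {m n : ℕ} {A : Matrix (Fin m) (Fin n) ℝ} {b : Fin m → ℝ} {c : Fin n → ℝ}

theorem colNorm_pos {j : Fin n} (h : ∃ i, A i j ≠ 0) : 0 < colNorm A j := by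
  obtain ⟨i, hi⟩ := h
  exact Real.sqrt_pos.2 <| (pow_pos (abs_pos.2 hi) 2).trans_le <| by
    simpa using single_le_sum (f := fun i => A i j ^ 2) (fun i _ => sq_nonneg _) (mem_univ i)

/-- The paper's `β`. -/
noncomputable def colNormRatio [NeZero n] (A : Matrix (Fin m) (Fin n) ℝ) : ℝ :=
  (univ.inf' univ_nonempty fun j => colNorm A j) / (univ.sup' univ_nonempty fun j => colNorm A j)

theorem colNormRatio_pos [NeZero n] (hcols : ∀ j, ∃ i, A i j ≠ 0) : 0 < colNormRatio A :=
  div_pos ((lt_inf'_iff _).2 fun j _ => colNorm_pos (hcols j))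
    ((lt_sup'_iff _).2 ⟨0, mem_univ _, colNorm_pos (hcols 0)⟩)

theorem colNormRatio_le_one [NeZero n] : colNormRatio A ≤ 1 :=
  div_le_one_of_le₀ ((inf'_le _ (mem_univ 0)).trans (le_sup' _ (mem_univ 0))) <|
    (Real.sqrt_nonneg _).trans (le_sup' (fun j => colNorm A j) (mem_univ 0))

theorem colNormRatio_mul_colNorm_le [NeZero n] (j j' : Fin n) :
    colNormRatio A * colNorm A j ≤ colNorm A j' := by
  set L := univ.inf' univ_nonempty fun j => colNorm A j
  set U := univ.sup' univ_nonempty fun j => colNorm A j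
  have hL : 0 ≤ L := (le_inf'_iff _ _).2 fun j _ => Real.sqrt_nonneg _
  have hjU : colNorm A j ≤ U := le_sup' (fun j => colNorm A j) (mem_univ j)
  calc L / U * colNorm A j ≤ L := by
        rcases (hL.trans ((inf'_le _ (mem_univ j)).trans hjU)).eq_or_lt with hU | hU
        · rw [← hU, div_zero, zero_mul]
          exact hL
        · rw [div_mul_eq_mul_div, div_le_iff₀ hU]
          exact mul_le_mul_of_nonneg_left hjU hL
    _ ≤ colNorm A j' := inf'_le _ (mem_univ j')

theorem IsBasis.eq_of_mulVec_eq {bas : Fin m → Fin n} (hb : IsBasis A bas) {u w : Fin n → ℝ}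
    (hu : ∀ j ∉ Set.range bas, u j = 0) (hw : ∀ j ∉ Set.range bas, w j = 0)
    (h : A *ᵥ u = A *ᵥ w) : u = w := by
  have hbasic : ∀ z : Fin n → ℝ, (∀ j ∉ Set.range bas, z j = 0) →
      A *ᵥ z = A.submatrix id bas *ᵥ (z ∘ bas) := fun z hz => funext fun i =>
    (Fintype.sum_of_injective bas hb.1 _ (fun j => A i j * z j)
      (fun j hj => by rw [hz j hj, mul_zero]) fun _ => rfl).symm
  have hcomp : u ∘ bas = w ∘ bas :=
    mulVec_injective_iff_isUnit.2 hb.2 (by rw [← hbasic u hu, ← hbasic w hw, h])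
  funext j
  by_cases hj : j ∈ Set.range bas
  · obtain ⟨k, rfl⟩ := hj
    exact congrFun hcomp k
  · rw [hu j hj, hw j hj]

theorem IsBasicFeasible.sum_le {v : Fin n → ℝ} (hv : IsBasicFeasible A b v) {γ : ℝ}
    (hγ : 0 ≤ γ) (hbound : ∀ j, 0 < v j → v j ≤ γ) : ∑ j, v j ≤ m * γ := by
  obtain ⟨⟨bas, hbas, hv0⟩, -, hvnn⟩ := hv
  rw [← Fintype.sum_of_injective bas hbas.1 (v ∘ bas) v hv0 fun _ => rfl]
  simpa using sum_le_card_nsmul univ (v ∘ bas) γ fun k _ => by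
    rcases (show (0 : ℝ) ≤ v (bas k) from hvnn _).eq_or_lt with h | h
    · exact (show v (bas k) ≤ γ from h ▸ hγ)
    · exact hbound _ h

theorem LDPivot.dotProduct_le {x x' : Fin n → ℝ} (h : LDPivot A b c x x') :
    c ⬝ᵥ x' ≤ c ⬝ᵥ x := by
  obtain ⟨_, _, _, _, hx0, hx, hxnn, _, _, _, _, _, _, _, hmin⟩ := h
  exact hmin x hx hxnn fun j hj _ => hx0 j hj

theorem colNormRatio_mul_neg_le [NeZero n] (hcols : ∀ j, ∃ i, A i j ≠ 0) {d : Fin n → ℝ}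
    {j j' : Fin n} (hd : d j' ≤ 0) (hrule : d j' / colNorm A j' ≤ d j / colNorm A j) :
    colNormRatio A * -d j ≤ -d j' := by
  have hN := colNorm_pos (hcols j)
  have hN' := colNorm_pos (hcols j')
  have hdj : -d j ≤ colNorm A j * (-d j' / colNorm A j') := by
    rw [← div_le_iff₀' hN, neg_div, neg_div]
    exact neg_le_neg hrule
  calc colNormRatio A * -d j ≤ colNormRatio A * colNorm A j * (-d j' / colNorm A j') := by
        rw [mul_assoc]
        exact mul_le_mul_of_nonneg_left hdj (colNormRatio_pos hcols).le
    _ ≤ colNorm A j' * (-d j' / colNorm A j') :=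
        mul_le_mul_of_nonneg_right (colNormRatio_mul_colNorm_le j j')
          (div_nonneg (neg_nonneg.2 hd) hN'.le)
    _ = -d j' := mul_div_cancel₀ _ hN'.ne'

theorem LDPivot.exists_entering [NeZero n] (hcols : ∀ j, ∃ i, A i j ≠ 0) {x x' : Fin n → ℝ}
    (h : LDPivot A b c x x') (hne : x' ≠ x) :
    ∃ (r : ℝ) (jl : Fin n), 0 ≤ r ∧ 0 < x' jl ∧ c ⬝ᵥ x' = c ⬝ᵥ x - r * x' jl ∧
      ∀ v, A *ᵥ v = b → 0 ≤ v → colNormRatio A * (c ⬝ᵥ x - c ⬝ᵥ v) ≤ r * ∑ j, v j := by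
  obtain ⟨bas, y, jl, hbas, hx0, hx, _, hy, hjl, hneg, hrule, hx', hx'nn, hx'0, _⟩ := h
  set d := c - Aᵀ *ᵥ y
  have hbasis : ∀ k, d (bas k) = 0 := fun k => sub_eq_zero.2 (congrFun hy k).symm
  have hobj : ∀ z, A *ᵥ z = b → c ⬝ᵥ z = y ⬝ᵥ b + d ⬝ᵥ z := fun z hz => by
    rw [dotProduct_eq_dotProduct_mulVec_add A y c z, hz]
  have hentering : ∀ z : Fin n → ℝ, (∀ j ∉ Set.range bas, j ≠ jl → z j = 0) →
      d ⬝ᵥ z = d jl * z jl := fun z hz => sum_eq_single jl (fun j _ hj => by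
    by_cases hjb : j ∈ Set.range bas
    · obtain ⟨k, rfl⟩ := hjb
      rw [hbasis k, zero_mul]
    · rw [hz j hjb hj, mul_zero]) (by simp)
  have hcx : c ⬝ᵥ x = y ⬝ᵥ b := by
    rw [hobj x hx, hentering x fun j hj _ => hx0 j hj, hx0 jl hjl, mul_zero, add_zero]
  have hpos : 0 < x' jl := by
    refine (hx'nn jl).lt_of_ne fun h0 =>
      hne (hbas.eq_of_mulVec_eq (fun j hj => ?_) hx0 (hx'.trans hx.symm))
    by_cases hj' : j = jl
    · rw [hj', ← h0]
      rfl
    · exact hx'0 j hj hj'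
  refine ⟨-d jl, jl, neg_nonneg.2 hneg.le, hpos, ?_, fun v hv hvnn => ?_⟩
  · rw [hobj x' hx', hentering x' hx'0, hcx]
    ring
  · calc colNormRatio A * (c ⬝ᵥ x - c ⬝ᵥ v) = ∑ j, colNormRatio A * -d j * v j := by
          rw [hcx, hobj v hv, sub_add_cancel_left, dotProduct, ← sum_neg_distrib, mul_sum]
          exact sum_congr rfl fun j _ => by ring
      _ ≤ ∑ j, -d jl * v j := sum_le_sum fun j _ => by
          refine mul_le_mul_of_nonneg_right ?_ (hvnn j)
          by_cases hjb : j ∈ Set.range bas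
          · obtain ⟨k, rfl⟩ := hjb
            rw [hbasis k, neg_zero, mul_zero]
            exact neg_nonneg.2 hneg.le
          · exact colNormRatio_mul_neg_le hcols hneg.le (hrule j hjb)
      _ = -d jl * ∑ j, v j := (mul_sum _ _ _).symm

theorem IsBasicFeasible.le_mul_of_pos {w : Fin n → ℝ} (hw : IsBasicFeasible A b w) {δ γ : ℝ}
    (hδγ : ∀ j, 0 < w j → δ ≤ w j ∧ w j ≤ γ) {j : Fin n} (hj : 0 < w j) : δ ≤ m * γ :=
  (hδγ j hj).1.trans <| (single_le_sum (fun i _ => hw.2.2 i) (mem_univ j)).trans <|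
    hw.sum_le ((hj.trans_le (hδγ j hj).2).le) fun i hi => (hδγ i hi).2

variable [NeZero n] {δ γ : ℝ}

noncomputable def pivotContraction (A : Matrix (Fin m) (Fin n) ℝ) (δ γ : ℝ) : ℝ :=
  1 - colNormRatio A * δ / (m * γ)

noncomputable def fixingTime (A : Matrix (Fin m) (Fin n) ℝ) (δ γ : ℝ) : ℕ :=
  ⌊(m * γ / (colNormRatio A * δ)) * Real.log (m * γ / δ)⌋₊ + 1

theorem pivotContraction_nonneg (hδ : 0 ≤ δ) (hδm : δ ≤ m * γ) : 0 ≤ pivotContraction A δ γ :=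
  sub_nonneg.2 <| div_le_one_of_le₀
    ((mul_le_of_le_one_left hδ colNormRatio_le_one).trans hδm) (hδ.trans hδm)

theorem pivotContraction_lt_one (hcols : ∀ j, ∃ i, A i j ≠ 0) (hδ : 0 < δ) (hδm : δ ≤ m * γ) :
    pivotContraction A δ γ < 1 := by
  have := colNormRatio_pos hcols
  have := hδ.trans_le hδm
  exact sub_lt_self 1 (by positivity)

theorem pivotContraction_pow_fixingTime_lt (hcols : ∀ j, ∃ i, A i j ≠ 0) (hδ : 0 < δ)
    (hδm : δ ≤ m * γ) : pivotContraction A δ γ ^ fixingTime A δ γ < δ / (m * γ) := by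
  have hβ := colNormRatio_pos hcols
  have hmγ := hδ.trans_le hδm
  have hK : m * γ / (colNormRatio A * δ) * Real.log (m * γ / δ) =
      Real.log (δ / (m * γ))⁻¹ / (colNormRatio A * δ / (m * γ)) := by
    rw [inv_div]
    field_simp
  rw [fixingTime, hK]
  exact one_sub_pow_floor_lt (by positivity)
    (sub_nonneg.1 (pivotContraction_nonneg (A := A) hδ.le hδm)) (by positivity)

section Trajectory

variable (hδγ : ∀ w, IsBasicFeasible A b w → ∀ j, 0 < w j → δ ≤ w j ∧ w j ≤ γ)
  (hcols : ∀ j, ∃ i, A i j ≠ 0) (hδ : 0 < δ) (hδm : δ ≤ m * γ)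
include hδγ hcols hδ hδm

theorem LDPivot.sub_le_mul_sub {v : Fin n → ℝ} (hv : IsBasicFeasible A b v)
    {x x' : Fin n → ℝ} (hx' : IsBasicFeasible A b x') (h : LDPivot A b c x x') (hne : x' ≠ x) :
    c ⬝ᵥ x' - c ⬝ᵥ v ≤ pivotContraction A δ γ * (c ⬝ᵥ x - c ⬝ᵥ v) := by
  obtain ⟨r, jl, hr, hpos, hobj, hgap⟩ := h.exists_entering hcols hne
  have hmγ : 0 < m * γ := hδ.trans_le hδm
  have hγ : 0 ≤ γ := (pos_of_mul_pos_right hmγ (Nat.cast_nonneg m)).le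
  have hβgap : colNormRatio A * (c ⬝ᵥ x - c ⬝ᵥ v) ≤ r * (m * γ) :=
    (hgap v hv.2.1 hv.2.2).trans <| mul_le_mul_of_nonneg_left
      (hv.sum_le hγ fun j hj => (hδγ v hv j hj).2) hr
  have hdrop : colNormRatio A * δ / (m * γ) * (c ⬝ᵥ x - c ⬝ᵥ v) ≤ r * x' jl := by
    rw [div_mul_eq_mul_div, div_le_iff₀ hmγ]
    calc colNormRatio A * δ * (c ⬝ᵥ x - c ⬝ᵥ v)
        = δ * (colNormRatio A * (c ⬝ᵥ x - c ⬝ᵥ v)) := by ring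
      _ ≤ δ * (r * (m * γ)) := mul_le_mul_of_nonneg_left hβgap hδ.le
      _ ≤ x' jl * (r * (m * γ)) :=
          mul_le_mul_of_nonneg_right (hδγ x' hx' jl hpos).1 (mul_nonneg hr hmγ.le)
      _ = r * x' jl * (m * γ) := by ring
  rw [hobj, pivotContraction]
  linarith

theorem gap_le_mul_or_of_mem_range {v : Fin n → ℝ} (hv : IsBasicFeasible A b v)
    {x : ℕ → Fin n → ℝ} (hBFS : ∀ t, IsBasicFeasible A b (x t))
    (hstep : ∀ t, x (t + 1) = x t ∨ LDPivot A b c (x t) (x (t + 1)))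
    {u w : Fin n → ℝ} (hu : u ∈ Set.range x) (hw : w ∈ Set.range x) (hne : u ≠ w) :
    c ⬝ᵥ w - c ⬝ᵥ v ≤ pivotContraction A δ γ * (c ⬝ᵥ u - c ⬝ᵥ v) ∨
      c ⬝ᵥ u - c ⬝ᵥ v ≤ pivotContraction A δ γ * (c ⬝ᵥ w - c ⬝ᵥ v) := by
  have hanti : Antitone fun t => c ⬝ᵥ x t - c ⬝ᵥ v :=
    antitone_nat_of_succ_le fun t => sub_le_sub_right
      ((hstep t).elim (fun heq => heq ▸ le_rfl) LDPivot.dotProduct_le) _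
  have hcontract : ∀ {a a'}, a ≤ a' → x a ≠ x a' →
      c ⬝ᵥ x a' - c ⬝ᵥ v ≤ pivotContraction A δ γ * (c ⬝ᵥ x a - c ⬝ᵥ v) :=
    le_mul_of_ne_of_antitone (g := fun w => c ⬝ᵥ w - c ⬝ᵥ v)
      (pivotContraction_nonneg hδ.le hδm) hanti fun t hne =>
        ((hstep t).resolve_left hne).sub_le_mul_sub hδγ hcols hδ hδm hv (hBFS _) hne
  obtain ⟨⟨a, rfl⟩, ⟨a', rfl⟩⟩ := And.intro hu hw
  rcases le_total a a' with h | h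
  · exact .inl (hcontract h hne)
  · exact .inr (hcontract h hne.symm)

theorem exists_fixed_index_of_isBasicFeasible {s v : Fin n → ℝ} (hs : 0 ≤ s)
    (hgap : ∀ w, A *ᵥ w = b → c ⬝ᵥ w - c ⬝ᵥ v = s ⬝ᵥ w) {u : Fin n → ℝ}
    (hu : IsBasicFeasible A b u) (hvu : c ⬝ᵥ v < c ⬝ᵥ u) :
    ∃ j, s j ≠ 0 ∧ 0 < u j ∧ ∀ w, IsBasicFeasible A b w → 0 < w j →
      pivotContraction A δ γ ^ fixingTime A δ γ * (c ⬝ᵥ u - c ⬝ᵥ v) < c ⬝ᵥ w - c ⬝ᵥ v := by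
  have hγ : 0 ≤ γ := (pos_of_mul_pos_right (hδ.trans_le hδm) (Nat.cast_nonneg m)).le
  obtain ⟨j, hsj, hj, hle⟩ := exists_fixed_index hs hu.2.2 (hgap u hu.2.1 ▸ sub_pos.2 hvu) hδ.le
    (hu.sum_le hγ fun j hj => (hδγ u hu j hj).2)
  refine ⟨j, hsj, hj, fun w hw hwj => ?_⟩
  refine (mul_lt_mul_of_pos_right (pivotContraction_pow_fixingTime_lt hcols hδ hδm)
    (sub_pos.2 hvu)).trans_le ?_
  rw [hgap u hu.2.1, hgap w hw.2.1]
  exact hle w hw.2.2 (hδγ w hw j hwj).1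

end Trajectory

end LargestDistance

theorem largest_distance_bound_without_objective_general {m n : ℕ} [NeZero n]
    (A : Matrix (Fin m) (Fin n) ℝ) (b : Fin m → ℝ) (c : Fin n → ℝ)
    (hrank : A.rank = m)
    (hcols : ∀ j : Fin n, ∃ i : Fin m, A i j ≠ 0)
    (β δ γ : ℝ)
    (hβ : β = (Finset.univ.inf' Finset.univ_nonempty fun j => colNorm A j) /
      (Finset.univ.sup' Finset.univ_nonempty fun j => colNorm A j))
    (hδ : 0 < δ)
    (hδγ : ∀ v, IsBasicFeasible A b v → ∀ j, 0 < v j → δ ≤ v j ∧ v j ≤ γ)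
    (zstar : ℝ)
    (hzatt : ∃ v, IsBasicFeasible A b v ∧ c ⬝ᵥ v = zstar)
    (hdualopt : ∃ (y : Fin m → ℝ) (s : Fin n → ℝ),
      Aᵀ *ᵥ y + s = c ∧ 0 ≤ s ∧ b ⬝ᵥ y = zstar)
    (x : ℕ → Fin n → ℝ)
    (hBFS : ∀ t, IsBasicFeasible A b (x t))
    (hstep : ∀ t, x (t + 1) = x t ∨ LDPivot A b c (x t) (x (t + 1))) :
    Set.ncard {v : Fin n → ℝ | (∃ t, x t = v) ∧ zstar < c ⬝ᵥ v} ≤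
      (n - m) * (⌊(m * γ / (β * δ)) * Real.log (m * γ / δ)⌋₊ + 1) := by
  classical
  obtain rfl : β = colNormRatio A := hβ
  obtain ⟨v, hv, rfl⟩ := hzatt
  obtain ⟨y₀, s₀, hys, hs₀, hby⟩ := hdualopt
  obtain ⟨s, hs, hsupp, hgap⟩ := exists_sparse_optimal_slack (c := c) (y₀ := y₀)
    (by simpa using hrank) hv.2.2 hv.2.1 (by rwa [← hys, add_sub_cancel_left])
    (by rw [dotProduct_comm, hby])
  set S := {w | (∃ t, x t = w) ∧ c ⬝ᵥ v < c ⬝ᵥ w}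
  have hSBFS : ∀ u ∈ S, IsBasicFeasible A b u := fun u ⟨⟨t, ht⟩, _⟩ => ht ▸ hBFS t
  rcases S.eq_empty_or_nonempty with hS | ⟨u₀, hu₀⟩
  · simp [hS]
  obtain ⟨j₀, hj₀, -⟩ := exists_pos_dotProduct_le_mul_sum (hSBFS u₀ hu₀).2.2
    (hgap _ (hSBFS u₀ hu₀).2.1 ▸ sub_pos.2 hu₀.2)
  have hδm := (hSBFS u₀ hu₀).le_mul_of_pos (hδγ _ (hSBFS u₀ hu₀)) hj₀
  choose! idx hidx using fun u (hu : u ∈ S) =>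
    exists_fixed_index_of_isBasicFeasible hδγ hcols hδ hδm hs hgap (hSBFS u hu) hu.2
  calc S.ncard ≤ fixingTime A δ γ * #{j | s j ≠ 0} :=
      Set.ncard_le_mul_card_of_geometric_separation (pivotContraction_nonneg hδ.le hδm)
        (pivotContraction_lt_one hcols hδ hδm) (fun u hu => sub_pos.2 hu.2)
        (fun u hu w hw => gap_le_mul_or_of_mem_range hδγ hcols hδ hδm hv hBFS hstep hu.1 hw.1)
        (fun u hu => by simpa using (hidx u hu).1) fun u hu w hw (hj : idx u = idx w) =>
          (hidx u hu).2.2 w (hSBFS w hw) (hj ▸ (hidx w hw).2.1)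
    _ ≤ (n - m) * fixingTime A δ γ := by
      rw [mul_comm]
      gcongr
      simpa using hsupp

/-- Theorem 2 of the paper: the simplex method with the largest distance rule applied to
`min c⬝x s.t. A x = b, x ≥ 0` (with `rank A = m`, primal and dual optimal basic
solutions existing, and a non-optimal initial BFS) generates at most
`(n − m) ⌈(mγ/(βδ)) log(mγ/δ)⌉` different (non-optimal) basic feasible solutions, where
`⌈r⌉` is the smallest integer greater than `r`. -/
theorem largest_distance_bound_without_objective {m n : ℕ} [NeZero n]
    (hm : 0 < m) (hmn : m < n)
    (A : Matrix (Fin m) (Fin n) ℝ) (b : Fin m → ℝ) (c : Fin n → ℝ)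
    (hrank : A.rank = m)
    (hcols : ∀ j : Fin n, ∃ i : Fin m, A i j ≠ 0)
    (β δ γ : ℝ)
    (hβ : β = (Finset.univ.inf' Finset.univ_nonempty fun j => colNorm A j) /
      (Finset.univ.sup' Finset.univ_nonempty fun j => colNorm A j))
    (hδ : 0 < δ)
    (hδγ : ∀ v, IsBasicFeasible A b v → ∀ j, 0 < v j → δ ≤ v j ∧ v j ≤ γ)
    (zstar : ℝ)
    (hzatt : ∃ v, IsBasicFeasible A b v ∧ c ⬝ᵥ v = zstar)
    (hzopt : ∀ v, A *ᵥ v = b → 0 ≤ v → zstar ≤ c ⬝ᵥ v)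
    (hdualopt : ∃ (y : Fin m → ℝ) (s : Fin n → ℝ),
      Aᵀ *ᵥ y + s = c ∧ 0 ≤ s ∧ b ⬝ᵥ y = zstar)
    (x : ℕ → Fin n → ℝ)
    (hBFS : ∀ t, IsBasicFeasible A b (x t))
    (hstep : ∀ t, x (t + 1) = x t ∨ LDPivot A b c (x t) (x (t + 1)))
    (hx0 : zstar < c ⬝ᵥ x 0) :
    Set.ncard {v : Fin n → ℝ | (∃ t, x t = v) ∧ zstar < c ⬝ᵥ v} ≤
      (n - m) * (⌊(m * γ / (β * δ)) * Real.log (m * γ / δ)⌋₊ + 1) :=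
  largest_distance_bound_without_objective_general A b c hrank hcols β δ γ hβ hδ hδγ zstar hzatt
    hdualopt x hBFS hstep
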